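/- arXiv:1510.07451 — 11 statements merged into one kernel-verified Lean document; each statement's English description precedes it below -/
import Mathlib

section
/- For all real numbers a > 0 and b with b > 2a, and for all real r and θ, the quantity a²r⁴ + br² + 1 is positive, and moreover (1 + ar²cos θ + √(a²r⁴+br²+1))·(1 - ar²cos θ - √(a²r⁴+br²+1)) < 0 whenever r ≠ 0. -/
/-- For all real `a > 0` and `b` with `b > 2a`, and for all real `r` and `θ`,
`a²r⁴ + br² + 1 > 0`, and moreover
`(1 + ar²cos θ + √(a²r⁴+br²+1))·(1 - ar²cos θ - √(a²r⁴+br²+1)) < 0` whenever `r ≠ 0`. -/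
theorem stmt0 (a b r θ : ℝ) (ha : 0 < a) (hb : 2 * a < b) :
    0 < a ^ 2 * r ^ 4 + b * r ^ 2 + 1 ∧
    (r ≠ 0 →
      (1 + a * r ^ 2 * Real.cos θ + Real.sqrt (a ^ 2 * r ^ 4 + b * r ^ 2 + 1)) *
        (1 - a * r ^ 2 * Real.cos θ - Real.sqrt (a ^ 2 * r ^ 4 + b * r ^ 2 + 1)) < 0) := by
  have hpos : 0 < a ^ 2 * r ^ 4 + b * r ^ 2 + 1 := by nlinarith [sq_nonneg r, sq_nonneg (r^2), sq_nonneg (a*r^2)]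
  refine ⟨hpos, fun hr => ?_⟩
  set Δ := Real.sqrt (a ^ 2 * r ^ 4 + b * r ^ 2 + 1) with hΔ
  have hr2 : 0 < r ^ 2 := by positivity
  have hΔgt : a * r ^ 2 + 1 < Δ := by
    have h1 : (a * r ^ 2 + 1) ^ 2 < a ^ 2 * r ^ 4 + b * r ^ 2 + 1 := by nlinarith
    exact (Real.lt_sqrt (by positivity : (0:ℝ) ≤ a * r ^ 2 + 1)).mpr h1
  have hcos : -1 ≤ Real.cos θ := Real.neg_one_le_cos θ
  have hX : -(a * r ^ 2) ≤ a * r ^ 2 * Real.cos θ := by nlinarith [mul_pos ha hr2]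
  have h1 : 0 < 1 + a * r ^ 2 * Real.cos θ + Δ := by nlinarith
  have h2 : 1 - a * r ^ 2 * Real.cos θ - Δ < 0 := by nlinarith
  exact mul_neg_of_pos_of_neg h1 h2
end

section
/- Let a > 0 and b = 2a. Then for all real r and θ, with Δ(r) = ar² + 1, the expression EG - F² = (r²/Δ(r)²)·(2 + ar²cos θ + ar²)·(ar²cos θ + ar²) is nonnegative, and it vanishes for r ≠ 0 exactly when θ ≡ π (mod 2π). -/
/-- For `a > 0` and `b = 2a`, with `Δ(r) = ar² + 1`, the expression
`EG - F² = (r²/Δ(r)²)·(2 + ar²cos θ + ar²)·(ar²cos θ + ar²)` is nonnegative,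
and for `r ≠ 0` it vanishes exactly when `θ ≡ π (mod 2π)`. -/
theorem stmt1 (a b : ℝ) (ha : 0 < a) (hb : b = 2 * a) :
    ∀ r θ : ℝ,
      let Δ : ℝ := a * r ^ 2 + 1
      let D : ℝ := (r ^ 2 / Δ ^ 2) * (2 + a * r ^ 2 * Real.cos θ + a * r ^ 2) *
        (a * r ^ 2 * Real.cos θ + a * r ^ 2)
      0 ≤ D ∧ (r ≠ 0 → (D = 0 ↔ ∃ k : ℤ, θ = Real.pi + 2 * Real.pi * k)) := by
  intro r θ Δ D
  have hc1 : (-1 : ℝ) ≤ Real.cos θ := Real.neg_one_le_cos θ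
  have har : 0 ≤ a * r ^ 2 := mul_nonneg ha.le (sq_nonneg r)
  have h3 : 0 ≤ a * r ^ 2 * Real.cos θ + a * r ^ 2 := by nlinarith
  have h2 : 0 < 2 + a * r ^ 2 * Real.cos θ + a * r ^ 2 := by nlinarith
  have hΔ : 0 < Δ := by positivity
  have h1 : 0 ≤ r ^ 2 / Δ ^ 2 := by positivity
  refine ⟨mul_nonneg (mul_nonneg h1 h2.le) h3, fun hr => ?_⟩
  have h1' : 0 < r ^ 2 / Δ ^ 2 := by positivity
  constructor
  · intro hD
    have : a * r ^ 2 * Real.cos θ + a * r ^ 2 = 0 := by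
      rcases mul_eq_zero.mp hD with h | h
      · exact absurd h (mul_pos h1' h2).ne'
      · exact h
    have har' : 0 < a * r ^ 2 := by positivity
    have hcos : Real.cos θ = -1 := by
      have := mul_left_cancel₀ har'.ne' (by linarith [this] : a * r ^ 2 * Real.cos θ = a * r ^ 2 * (-1))
      exact this
    obtain ⟨k, hk⟩ := Real.cos_eq_neg_one_iff.mp hcos
    exact ⟨k, by linarith [hk]⟩
  · rintro ⟨k, rfl⟩
    have hcos : Real.cos (Real.pi + 2 * Real.pi * k) = -1 :=
      Real.cos_eq_neg_one_iff.mpr ⟨k, by ring⟩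
    simp only [D, hcos]
    ring
end

section
/- Let a > 0 and b = -2a, and suppose 0 < r² < 1/a. Then with Δ(r) = 1 - ar², for all θ the quantity -(r²/Δ(r)²)·(2 + ar²cos θ - ar²)·(-ar²cos θ + ar²) is nonpositive, i.e. EG - F² ≤ 0; moreover 2 + ar²cos θ - ar² ≥ 2(1 - ar²) > 0 and -ar²cos θ + ar² ≥ 0, and EG - F² = 0 for r ≠ 0 exactly when θ ≡ 0 (mod 2π). -/
/-- For `a > 0`, `b = -2a`, `0 < r² < 1/a`, with `Δ(r) = 1 - ar²`, the quantity
`EG - F² = -(r²/Δ(r)²)·(2 + ar²cos θ - ar²)·(-ar²cos θ + ar²)` is nonpositive; moreover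
`2 + ar²cos θ - ar² ≥ 2(1 - ar²) > 0` and `-ar²cos θ + ar² ≥ 0`, and `EG - F² = 0`
exactly when `θ ≡ 0 (mod 2π)`. -/
theorem stmt4 (a b : ℝ) (ha : 0 < a) (hb : b = -2 * a) :
    ∀ r θ : ℝ, 0 < r ^ 2 → r ^ 2 < 1 / a →
      let Δ : ℝ := 1 - a * r ^ 2
      let D : ℝ := -(r ^ 2 / Δ ^ 2) * (2 + a * r ^ 2 * Real.cos θ - a * r ^ 2) *
        (-(a * r ^ 2 * Real.cos θ) + a * r ^ 2)
      D ≤ 0 ∧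
      2 * (1 - a * r ^ 2) ≤ 2 + a * r ^ 2 * Real.cos θ - a * r ^ 2 ∧
      0 < 2 * (1 - a * r ^ 2) ∧
      0 ≤ -(a * r ^ 2 * Real.cos θ) + a * r ^ 2 ∧
      (D = 0 ↔ ∃ k : ℤ, θ = 2 * Real.pi * k) := by
  intro r θ hr hra Δ D
  have har : a * r ^ 2 < 1 := by
    have := (lt_div_iff₀ ha).mp hra
    linarith [mul_comm (r ^ 2) a]
  have har0 : 0 < a * r ^ 2 := mul_pos ha hr
  have hcos1 : Real.cos θ ≤ 1 := Real.cos_le_one θ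
  have hcosm1 : -1 ≤ Real.cos θ := Real.neg_one_le_cos θ
  have h2 : 2 * (1 - a * r ^ 2) ≤ 2 + a * r ^ 2 * Real.cos θ - a * r ^ 2 := by nlinarith
  have h3 : 0 < 2 * (1 - a * r ^ 2) := by linarith
  have h4 : 0 ≤ -(a * r ^ 2 * Real.cos θ) + a * r ^ 2 := by nlinarith
  have hΔ : (0:ℝ) < Δ ^ 2 := by
    have : Δ > 0 := by simp only [Δ]; linarith
    positivity
  have hfac : 0 ≤ r ^ 2 / Δ ^ 2 := div_nonneg (le_of_lt hr) (le_of_lt hΔ)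
  have hD : D ≤ 0 := by
    have := mul_nonneg (mul_nonneg hfac (by linarith : (0:ℝ) ≤ 2 + a * r ^ 2 * Real.cos θ - a * r ^ 2)) h4
    simp only [D]
    nlinarith
  refine ⟨hD, h2, h3, h4, ?_⟩
  constructor
  · intro hD0
    have hfac' : 0 < r ^ 2 / Δ ^ 2 := div_pos hr hΔ
    have hmid : 0 < 2 + a * r ^ 2 * Real.cos θ - a * r ^ 2 := by linarith
    have hzero : -(a * r ^ 2 * Real.cos θ) + a * r ^ 2 = 0 := by
      by_contra h
      have hpos : 0 < -(a * r ^ 2 * Real.cos θ) + a * r ^ 2 := lt_of_le_of_ne h4 (Ne.symm h)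
      have hprod : 0 < r ^ 2 / Δ ^ 2 * (2 + a * r ^ 2 * Real.cos θ - a * r ^ 2) *
          (-(a * r ^ 2 * Real.cos θ) + a * r ^ 2) := mul_pos (mul_pos hfac' hmid) hpos
      have : D < 0 := by
        simp only [D]
        nlinarith [hprod]
      linarith
    have hcos : Real.cos θ = 1 := by
      have : a * r ^ 2 * Real.cos θ = a * r ^ 2 := by linarith
      have := mul_left_cancel₀ (ne_of_gt har0) (this.trans (mul_one (a * r ^ 2)).symm)
      exact this
    obtain ⟨n, hn⟩ := (Real.cos_eq_one_iff θ).mp hcos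
    exact ⟨n, by rw [← hn]; ring⟩
  · rintro ⟨k, rfl⟩
    have : Real.cos (2 * Real.pi * k) = 1 := by
      rw [mul_comm]
      exact Real.cos_int_mul_two_pi k
    simp only [D, this]
    ring
end

section
/- Let a, b, δ be real with (a,b) ≠ (0,0) and let Δ(r) = √((a²-b²)r⁴ + 2δr² - 1) be positive on an interval I with 0 ∉ I. Then for the surface X(r,θ) = (∫ᵣ₀ʳ 1/Δ(s) ds, ∫ᵣ₀ʳ as²/Δ(s) ds + r cosh θ, ∫ᵣ₀ʳ bs²/Δ(s) ds + r sinh θ), the normal vector X_r × X_θ satisfies ⟨X_r × X_θ, X_r × X_θ⟩ = (ar³cosh θ/Δ(r) + r - br³sinh θ/Δ(r))² + (r/Δ(r))² > 0; consequently the surface is timelike on its whole domain. -/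
/-- Lorentzian inner product on `ℝ × ℝ × ℝ` for the metric `dx² + dy² - dt²`. -/
def Lprod (p q : ℝ × ℝ × ℝ) : ℝ := p.1 * q.1 + p.2.1 * q.2.1 - p.2.2 * q.2.2

/-- Lorentzian cross product on `ℝ × ℝ × ℝ`, satisfying `Lprod (Lcross p q) w = det(p,q,w)`
up to sign conventions; it satisfies `Lprod (Lcross p q) (Lcross p q) = -(EG - F²)`. -/
def Lcross (p q : ℝ × ℝ × ℝ) : ℝ × ℝ × ℝ :=
  (p.2.1 * q.2.2 - p.2.2 * q.2.1, p.2.2 * q.1 - p.1 * q.2.2, -(p.1 * q.2.1 - p.2.1 * q.1))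

/-!
Both partial derivatives are explicit: the fundamental theorem of calculus gives
`X_r = (1/Δ, ar²/Δ + cosh θ, br²/Δ + sinh θ)` and `X_θ = (0, r sinh θ, r cosh θ)`.
Since `⟨X_r × X_θ, X_r × X_θ⟩ = F² - EG` and `G = -r²`, the identity `cosh² - sinh² = 1`
turns `F² + r² E` into a sum of two squares, the second of which, `(r/Δ)²`, is positive
because `r ≠ 0` and `Δ > 0` on `I`.
-/

open Real

theorem lprod_lcross_self (p q : ℝ × ℝ × ℝ) :
    Lprod (Lcross p q) (Lcross p q) = Lprod p q ^ 2 - Lprod p p * Lprod q q := by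
  simp only [Lprod, Lcross]
  ring

theorem lprod_lcross_self_hyperbola (p A B r θ : ℝ) :
    Lprod (Lcross (p, A + cosh θ, B + sinh θ) (0, r * sinh θ, r * cosh θ))
        (Lcross (p, A + cosh θ, B + sinh θ) (0, r * sinh θ, r * cosh θ)) =
      (r * (A * cosh θ + 1 - B * sinh θ)) ^ 2 + (r * p) ^ 2 := by
  rw [lprod_lcross_self]
  simp only [Lprod]
  linear_combination
    r ^ 2 * (p ^ 2 + 2 * A * cosh θ - 2 * B * sinh θ + cosh θ ^ 2 - sinh θ ^ 2 + 1) *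
      cosh_sq_sub_sinh_sq θ

theorem hasDerivAt_intervalIntegral_of_continuousOn {E : Type*} [NormedAddCommGroup E]
    [NormedSpace ℝ E] [CompleteSpace E] {f : ℝ → E} {I : Set ℝ} (hIo : IsOpen I)
    (hIc : I.OrdConnected) (hf : ContinuousOn f I) {a x : ℝ} (ha : a ∈ I) (hx : x ∈ I) :
    HasDerivAt (fun y => ∫ s in a..y, f s) (f x) x :=
  intervalIntegral.integral_hasDerivAt_right
    ((hf.mono (hIc.uIcc_subset ha hx)).intervalIntegrable)
    (hf.stronglyMeasurableAtFilter hIo x hx) (hf.continuousAt (hIo.mem_nhds hx))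

noncomputable def riemannTypeSurface (a b : ℝ) (Δ : ℝ → ℝ) (r₀ r θ : ℝ) : ℝ × ℝ × ℝ :=
  ((∫ s in r₀..r, 1 / Δ s),
    (∫ s in r₀..r, a * s ^ 2 / Δ s) + r * cosh θ,
    (∫ s in r₀..r, b * s ^ 2 / Δ s) + r * sinh θ)

section riemannTypeSurface

variable (a b : ℝ) {Δ : ℝ → ℝ} {I : Set ℝ} {r₀ r : ℝ} (θ : ℝ)

theorem hasDerivAt_riemannTypeSurface_radial (hIo : IsOpen I) (hIc : I.OrdConnected)
    (hΔ : ContinuousOn Δ I) (hΔ₀ : ∀ s ∈ I, Δ s ≠ 0) (hr₀ : r₀ ∈ I) (hr : r ∈ I) :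
    HasDerivAt (fun r' => riemannTypeSurface a b Δ r₀ r' θ)
      (1 / Δ r, a * r ^ 2 / Δ r + cosh θ, b * r ^ 2 / Δ r + sinh θ) r := by
  have ftc : ∀ g : ℝ → ℝ, Continuous g →
      HasDerivAt (fun r' => ∫ s in r₀..r', g s / Δ s) (g r / Δ r) r := fun g hg =>
    hasDerivAt_intervalIntegral_of_continuousOn hIo hIc (hg.continuousOn.div hΔ hΔ₀) hr₀ hr
  have hsq : ∀ c : ℝ, Continuous fun s : ℝ => c * s ^ 2 := fun c => by fun_prop
  unfold riemannTypeSurface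
  simpa using (ftc (fun _ => 1) continuous_const).prodMk
    (((ftc _ (hsq a)).add ((hasDerivAt_id r).mul_const (cosh θ))).prodMk
      ((ftc _ (hsq b)).add ((hasDerivAt_id r).mul_const (sinh θ))))

theorem hasDerivAt_riemannTypeSurface_angular :
    HasDerivAt (fun θ' => riemannTypeSurface a b Δ r₀ r θ')
      (0, r * sinh θ, r * cosh θ) θ := by
  unfold riemannTypeSurface
  simpa using (hasDerivAt_const θ _).prodMk
    (((hasDerivAt_const θ _).add ((hasDerivAt_cosh θ).const_mul r)).prodMk
      ((hasDerivAt_const θ _).add ((hasDerivAt_sinh θ).const_mul r)))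

end riemannTypeSurface

theorem stmt7_general (a b δ : ℝ)
    (I : Set ℝ) (hIo : IsOpen I) (hIc : I.OrdConnected) (h0 : (0:ℝ) ∉ I)
    (Δ : ℝ → ℝ) (hΔ : ∀ s, Δ s = Real.sqrt ((a ^ 2 - b ^ 2) * s ^ 4 + 2 * δ * s ^ 2 - 1))
    (hpos : ∀ s ∈ I, 0 < (a ^ 2 - b ^ 2) * s ^ 4 + 2 * δ * s ^ 2 - 1)
    (r0 : ℝ) (hr0 : r0 ∈ I)
    (X : ℝ → ℝ → ℝ × ℝ × ℝ)
    (hX : ∀ r θ, X r θ = ((∫ s in r0..r, 1 / Δ s),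
        (∫ s in r0..r, a * s ^ 2 / Δ s) + r * Real.cosh θ,
        (∫ s in r0..r, b * s ^ 2 / Δ s) + r * Real.sinh θ)) :
    ∀ r ∈ I, ∀ θ : ℝ,
      let n := Lcross (deriv (fun r' => X r' θ) r) (deriv (fun θ' => X r θ') θ)
      Lprod n n =
        (a * r ^ 3 * Real.cosh θ / Δ r + r - b * r ^ 3 * Real.sinh θ / Δ r) ^ 2 +
          (r / Δ r) ^ 2 ∧
      0 < Lprod n n := by
  intro r hr θ n
  obtain rfl : X = riemannTypeSurface a b Δ r0 := funext₂ hX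
  have hΔ₀ : ∀ s ∈ I, Δ s ≠ 0 := fun s hs => by
    rw [hΔ s]
    exact (sqrt_pos.mpr (hpos s hs)).ne'
  have hΔc : ContinuousOn Δ I := by
    rw [funext hΔ]
    fun_prop
  have hnorm : Lprod n n =
      (a * r ^ 3 * cosh θ / Δ r + r - b * r ^ 3 * sinh θ / Δ r) ^ 2 + (r / Δ r) ^ 2 := by
    simp only [n, (hasDerivAt_riemannTypeSurface_radial a b θ hIo hIc hΔc hΔ₀ hr0 hr).deriv,
      (hasDerivAt_riemannTypeSurface_angular a b θ).deriv, lprod_lcross_self_hyperbola]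
    ring
  have hrΔ : r / Δ r ≠ 0 := div_ne_zero (ne_of_mem_of_not_mem hr h0) (hΔ₀ r hr)
  exact ⟨hnorm, hnorm ▸ by positivity⟩

/-- For the Type I general ZMC surface of Riemann type foliated by hyperbolas,
with `Δ(r) = √((a²-b²)r⁴ + 2δr² - 1)` positive on an interval `I` with `0 ∉ I`, the normal
vector `X_r × X_θ` satisfies
`⟨X_r × X_θ, X_r × X_θ⟩ = (ar³cosh θ/Δ(r) + r - br³sinh θ/Δ(r))² + (r/Δ(r))² > 0`;
hence the surface is timelike on its whole domain. -/
theorem stmt7 (a b δ : ℝ) (hab : (a, b) ≠ ((0 : ℝ), (0 : ℝ)))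
    (I : Set ℝ) (hIo : IsOpen I) (hIc : I.OrdConnected) (h0 : (0:ℝ) ∉ I)
    (Δ : ℝ → ℝ) (hΔ : ∀ s, Δ s = Real.sqrt ((a ^ 2 - b ^ 2) * s ^ 4 + 2 * δ * s ^ 2 - 1))
    (hpos : ∀ s ∈ I, 0 < (a ^ 2 - b ^ 2) * s ^ 4 + 2 * δ * s ^ 2 - 1)
    (r0 : ℝ) (hr0 : r0 ∈ I)
    (X : ℝ → ℝ → ℝ × ℝ × ℝ)
    (hX : ∀ r θ, X r θ = ((∫ s in r0..r, 1 / Δ s),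
        (∫ s in r0..r, a * s ^ 2 / Δ s) + r * Real.cosh θ,
        (∫ s in r0..r, b * s ^ 2 / Δ s) + r * Real.sinh θ)) :
    ∀ r ∈ I, ∀ θ : ℝ,
      let n := Lcross (deriv (fun r' => X r' θ) r) (deriv (fun θ' => X r θ') θ)
      Lprod n n =
        (a * r ^ 3 * Real.cosh θ / Δ r + r - b * r ^ 3 * Real.sinh θ / Δ r) ^ 2 +
          (r / Δ r) ^ 2 ∧
      0 < Lprod n n :=
  stmt7_general a b δ I hIo hIc h0 Δ hΔ hpos r0 hr0 X hX
end

section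
/- Let a, b be real with b² - a² > 0, and set c = √(b² - a²). For the map X(u,θ) = (u, (a/c)u + sinh(θ)/√c, (b/c)u + cosh(θ)/√c) into Lorentz-Minkowski 3-space, the determinant of the induced metric with respect to (u,θ) equals -(1/c³)(b sinh θ - a cosh θ)². Setting θ₀ = (1/2)log((a+b)/(b-a)), the equation b sinh θ - a cosh θ = 0 has θ = θ₀ as its unique solution; hence the surface is timelike for θ ≠ θ₀ and the curve u ↦ X(u, θ₀) is a lightlike straight line. -/
/-!
The surface is ruled: `X u θ = u • v + h θ` with `v = (1, a/c, b/c)`, which is lightlike because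
`c² = b² - a²`, and `h` a hyperbola. Since `⟨v, v⟩ = 0` the Gram determinant reduces to
`-⟨v, h' θ⟩²`, and `⟨v, h' θ⟩ = (a cosh θ - b sinh θ) / c^{3/2}`. Multiplying by `2 e^θ`, the
equation `b sinh θ = a cosh θ` becomes `(b - a) e^{2θ} = a + b`, whose unique solution is `θ₀`
since `(a + b) / (b - a) > 0` when `a² < b²`.
-/

open Real

lemma add_div_sub_pos_of_sq_lt_sq {a b : ℝ} (h : a ^ 2 < b ^ 2) : 0 < (a + b) / (b - a) := by
  have hba : b - a ≠ 0 := sub_ne_zero.mpr (by rintro rfl; exact lt_irrefl _ h)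
  have : (a + b) / (b - a) = (b ^ 2 - a ^ 2) / (b - a) ^ 2 := by field_simp; ring
  rw [this]
  exact div_pos (by linarith) (by positivity)

lemma mul_sinh_sub_mul_cosh_eq_zero_iff_exp {a b : ℝ} (hab : a ≠ b) (θ : ℝ) :
    b * sinh θ - a * cosh θ = 0 ↔ exp (2 * θ) = (a + b) / (b - a) := by
  have hba : b - a ≠ 0 := sub_ne_zero.mpr hab.symm
  have hexp : exp (2 * θ) = exp θ * exp θ := by rw [two_mul, exp_add]
  rw [sinh_eq, cosh_eq, exp_neg, hexp, eq_div_iff hba]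
  have := exp_pos θ
  constructor
  · intro h
    field_simp at h
    linear_combination h
  · intro h
    field_simp
    linear_combination h

lemma mul_sinh_sub_mul_cosh_eq_zero_iff {a b : ℝ} (h : a ^ 2 < b ^ 2) (θ : ℝ) :
    b * sinh θ - a * cosh θ = 0 ↔ θ = 1 / 2 * log ((a + b) / (b - a)) := by
  have hab : a ≠ b := by rintro rfl; exact lt_irrefl _ h
  rw [mul_sinh_sub_mul_cosh_eq_zero_iff_exp hab, ← exp_log (add_div_sub_pos_of_sq_lt_sq h),
    exp_eq_exp, log_exp]
  constructor <;> intro h <;> linarith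

noncomputable section Surface

variable (a b c : ℝ)

def rulingDir : ℝ × ℝ × ℝ := (1, a / c, b / c)

def hyperbola (θ : ℝ) : ℝ × ℝ × ℝ := (0, sinh θ / √c, cosh θ / √c)

lemma hasDerivAt_hyperbola (θ : ℝ) :
    HasDerivAt (hyperbola c) (0, cosh θ / √c, sinh θ / √c) θ :=
  (hasDerivAt_const θ 0).prodMk
    (((hasDerivAt_sinh θ).div_const √c).prodMk ((hasDerivAt_cosh θ).div_const √c))

variable {a b c}

lemma Lprod_rulingDir_self (hc : c ^ 2 = b ^ 2 - a ^ 2) (hc0 : c ≠ 0) :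
    Lprod (rulingDir a b c) (rulingDir a b c) = 0 := by
  simp only [Lprod, rulingDir]
  field_simp
  linear_combination hc

lemma Lprod_rulingDir_hyperbola_deriv (θ : ℝ) :
    Lprod (rulingDir a b c) (0, cosh θ / √c, sinh θ / √c) =
      (a * cosh θ - b * sinh θ) / (c * √c) := by
  simp only [Lprod, rulingDir, div_mul_div_comm, mul_zero, zero_add, div_sub_div_same]

lemma gram_det_rulingDir_hyperbola (hc : c ^ 2 = b ^ 2 - a ^ 2) (hc0 : 0 < c) (θ : ℝ) :
    Lprod (rulingDir a b c) (rulingDir a b c) *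
        Lprod (0, cosh θ / √c, sinh θ / √c) (0, cosh θ / √c, sinh θ / √c) -
      Lprod (rulingDir a b c) (0, cosh θ / √c, sinh θ / √c) ^ 2 =
        -(1 / c ^ 3) * (b * sinh θ - a * cosh θ) ^ 2 := by
  rw [Lprod_rulingDir_self hc hc0.ne', Lprod_rulingDir_hyperbola_deriv, div_pow, mul_pow,
    sq_sqrt hc0.le]
  field_simp
  ring

end Surface

/-- For `b² - a² > 0`, `c = √(b²-a²)`, and the Type II singular-type surface
`X(u,θ) = (u, (a/c)u + sinh θ/√c, (b/c)u + cosh θ/√c)`, the determinant of the induced metric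
equals `-(1/c³)(b sinh θ - a cosh θ)²`; with `θ₀ = (1/2)log((a+b)/(b-a))`, the equation
`b sinh θ - a cosh θ = 0` has `θ₀` as its unique solution; the surface is timelike for
`θ ≠ θ₀`, and `u ↦ X(u, θ₀)` is a lightlike straight line. -/
theorem stmt8 (a b c θ₀ : ℝ) (hab : 0 < b ^ 2 - a ^ 2) (hc : c = Real.sqrt (b ^ 2 - a ^ 2))
    (hθ₀ : θ₀ = (1 / 2) * Real.log ((a + b) / (b - a)))
    (X : ℝ → ℝ → ℝ × ℝ × ℝ)
    (hX : ∀ u θ, X u θ = (u, (a / c) * u + Real.sinh θ / Real.sqrt c,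
        (b / c) * u + Real.cosh θ / Real.sqrt c)) :
    (∀ u θ : ℝ,
      let Xu := deriv (fun u' => X u' θ) u
      let Xθ := deriv (fun θ' => X u θ') θ
      Lprod Xu Xu * Lprod Xθ Xθ - (Lprod Xu Xθ) ^ 2 =
        -(1 / c ^ 3) * (b * Real.sinh θ - a * Real.cosh θ) ^ 2 ∧
      (θ ≠ θ₀ → Lprod Xu Xu * Lprod Xθ Xθ - (Lprod Xu Xθ) ^ 2 < 0)) ∧
    (∀ θ : ℝ, b * Real.sinh θ - a * Real.cosh θ = 0 ↔ θ = θ₀) ∧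
    (∀ u : ℝ, X u θ₀ = u • ((1, a / c, b / c) : ℝ × ℝ × ℝ) +
      ((0, Real.sinh θ₀ / Real.sqrt c, Real.cosh θ₀ / Real.sqrt c) : ℝ × ℝ × ℝ)) ∧
    Lprod (1, a / c, b / c) (1, a / c, b / c) = 0 ∧
    ((1, a / c, b / c) : ℝ × ℝ × ℝ) ≠ 0 := by
  have hc0 : 0 < c := hc ▸ sqrt_pos.mpr hab
  have hc2 : c ^ 2 = b ^ 2 - a ^ 2 := hc ▸ sq_sqrt hab.le
  have hθ₀_iff (θ : ℝ) : b * sinh θ - a * cosh θ = 0 ↔ θ = θ₀ :=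
    hθ₀ ▸ mul_sinh_sub_mul_cosh_eq_zero_iff (by linarith) θ
  have hX_ruled (u θ : ℝ) : X u θ = u • rulingDir a b c + hyperbola c θ := by
    simp [hX, rulingDir, hyperbola, Prod.smul_def, mul_comm]
  have hXu (u θ : ℝ) : deriv (fun u' => X u' θ) u = rulingDir a b c := by
    simp only [hX_ruled]
    simpa using (((hasDerivAt_id u).smul_const (rulingDir a b c)).add_const (hyperbola c θ)).deriv
  have hXθ (u θ : ℝ) : deriv (fun θ' => X u θ') θ = (0, cosh θ / √c, sinh θ / √c) := by
    simp only [hX_ruled]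
    exact ((hasDerivAt_hyperbola c θ).const_add _).deriv
  refine ⟨fun u θ => ?_, hθ₀_iff, fun u => hX_ruled u θ₀, Lprod_rulingDir_self hc2 hc0.ne',
    by simp⟩
  simp only [hXu, hXθ, gram_det_rulingDir_hyperbola hc2 hc0, true_and]
  intro hθ
  have hK : b * sinh θ - a * cosh θ ≠ 0 := fun h => hθ ((hθ₀_iff θ).mp h)
  have : 0 < 1 / c ^ 3 * (b * sinh θ - a * cosh θ) ^ 2 := by positivity
  linarith
end

section
/- Let a, b be real with b² - a² > 0 and set c = √(b² - a²). For the Type I map X(u,θ) = (u, (a/c)u + cosh(θ)/√c, (b/c)u + sinh(θ)/√c), the determinant of the induced metric equals -(1/c³)(a sinh θ - b cosh θ)², and a sinh θ - b cosh θ ≠ 0 for every real θ. Hence the surface is timelike everywhere. -/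
open Real

lemma sub_sq_le_sq_mul_sinh_sub_mul_cosh (a b θ : ℝ) :
    b ^ 2 - a ^ 2 ≤ (a * sinh θ - b * cosh θ) ^ 2 := by
  nlinarith [cosh_sq θ, sq_nonneg (a * cosh θ - b * sinh θ)]

lemma mul_sinh_sub_mul_cosh_ne_zero {a b : ℝ} (hab : 0 < b ^ 2 - a ^ 2) (θ : ℝ) :
    a * sinh θ - b * cosh θ ≠ 0 := by
  intro h
  have := sub_sq_le_sq_mul_sinh_sub_mul_cosh a b θ
  rw [h] at this
  linarith

lemma hasDerivAt_affine_line (p q r s u : ℝ) :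
    HasDerivAt (fun u : ℝ => (u, p * u + q, r * u + s)) (1, p, r) u := by
  have hid := hasDerivAt_id' u
  refine hid.prodMk (HasDerivAt.prodMk ?_ ?_)
  · simpa using (hid.const_mul p).add_const q
  · simpa using (hid.const_mul r).add_const s

lemma hasDerivAt_hyperbola_s9 (x y z k θ : ℝ) :
    HasDerivAt (fun θ : ℝ => (x, y + cosh θ / k, z + sinh θ / k))
      (0, sinh θ / k, cosh θ / k) θ :=
  (hasDerivAt_const θ x).prodMk
    (((hasDerivAt_cosh θ).div_const k).const_add y |>.prodMk
      (((hasDerivAt_sinh θ).div_const k).const_add z))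

lemma Lprod_gram_det_typeI {a b c : ℝ} (hc : 0 < c) (hc2 : c ^ 2 = b ^ 2 - a ^ 2) (θ : ℝ) :
    let Xu : ℝ × ℝ × ℝ := (1, a / c, b / c)
    let Xθ : ℝ × ℝ × ℝ := (0, sinh θ / √c, cosh θ / √c)
    Lprod Xu Xu * Lprod Xθ Xθ - (Lprod Xu Xθ) ^ 2 =
      -(1 / c ^ 3) * (a * sinh θ - b * cosh θ) ^ 2 := by
  have hsqrt : √c ^ 2 = c := sq_sqrt hc.le
  have hsqrt_pos : 0 < √c := sqrt_pos.mpr hc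
  simp only [Lprod]
  field_simp
  rw [hsqrt]
  linear_combination (sinh θ ^ 2 - cosh θ ^ 2) * c * hc2

/-- For `b² - a² > 0`, `c = √(b²-a²)`, and the Type I singular-type surface
`X(u,θ) = (u, (a/c)u + cosh θ/√c, (b/c)u + sinh θ/√c)`, the determinant of the induced
metric equals `-(1/c³)(a sinh θ - b cosh θ)²` and `a sinh θ - b cosh θ ≠ 0` for every `θ`;
hence the surface is timelike everywhere. -/
theorem stmt9 (a b c : ℝ) (hab : 0 < b ^ 2 - a ^ 2) (hc : c = Real.sqrt (b ^ 2 - a ^ 2))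
    (X : ℝ → ℝ → ℝ × ℝ × ℝ)
    (hX : ∀ u θ, X u θ = (u, (a / c) * u + Real.cosh θ / Real.sqrt c,
        (b / c) * u + Real.sinh θ / Real.sqrt c)) :
    ∀ u θ : ℝ,
      let Xu := deriv (fun u' => X u' θ) u
      let Xθ := deriv (fun θ' => X u θ') θ
      Lprod Xu Xu * Lprod Xθ Xθ - (Lprod Xu Xθ) ^ 2 =
        -(1 / c ^ 3) * (a * Real.sinh θ - b * Real.cosh θ) ^ 2 ∧
      a * Real.sinh θ - b * Real.cosh θ ≠ 0 ∧
      Lprod Xu Xu * Lprod Xθ Xθ - (Lprod Xu Xθ) ^ 2 < 0 := by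
  have hc_pos : 0 < c := hc ▸ sqrt_pos.mpr hab
  have hc2 : c ^ 2 = b ^ 2 - a ^ 2 := hc ▸ sq_sqrt hab.le
  obtain rfl : X = _ := funext fun u => funext (hX u)
  intro u θ Xu Xθ
  have hXu : Xu = (1, a / c, b / c) := (hasDerivAt_affine_line _ _ _ _ u).deriv
  have hXθ : Xθ = (0, sinh θ / √c, cosh θ / √c) := (hasDerivAt_hyperbola_s9 _ _ _ _ θ).deriv
  have hdet := Lprod_gram_det_typeI hc_pos hc2 θ
  have hne := mul_sinh_sub_mul_cosh_ne_zero hab θ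
  rw [hXu, hXθ]
  refine ⟨hdet, hne, hdet ▸ ?_⟩
  have : 0 < 1 / c ^ 3 * (a * sinh θ - b * cosh θ) ^ 2 := by positivity
  linarith
end

section
/- Let a > 0, b, c be real, and on an interval where cos(√(2a)(u+c)) ≠ 0 and sin(√(2a)(u+c)) ≠ 0 define r(u) = √(a/2)·tan(√(2a)(u+c)), f(u) = -(√2 b/a^{3/2})cot(√(2a)(u+c)) - (2b/a)(u+c), g(u) = -(b²/(√2 a^{5/2}))cot(√(2a)(u+c)) + (p/(4√(2a)))sin(2√(2a)(u+c)) + (p/2 - b²/a²)(u+c). Then r' = 2r² + a, r²f' = b, and b²/r(u)² - 2a·g'(u) = -2ap·cos²(√(2a)(u+c)). -/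
/-! With `θ = √(2a)(u+c)` the constants collapse: `√(a/2)·√(2a) = a`,
`√2·√(2a)/a^{3/2} = 2/a` and `√(2a)/(√2·a^{5/2}) = 1/a²`. Hence `r' = a/cos²θ = 2r² + a`,
`f' = (2b/a)cot²θ`, which is `b/r²` because `r² = (a/2)tan²θ`, and
`g' = (b²/a²)cot²θ + p cos²θ` (using `cos 2θ = 2cos²θ - 1`), so the `cot²` terms cancel
in `b²/r² - 2a·g'`. -/

open Real

section AffineArgument

variable (k c u : ℝ)

theorem hasDerivAt_mul_add_const : HasDerivAt (fun u : ℝ => k * (u + c)) k u := by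
  simpa using ((hasDerivAt_id u).add_const c).const_mul k

theorem hasDerivAt_tan_mul_add_const (hcos : cos (k * (u + c)) ≠ 0) :
    HasDerivAt (fun u : ℝ => tan (k * (u + c))) (k / cos (k * (u + c)) ^ 2) u := by
  refine ((hasDerivAt_tan hcos).comp u (hasDerivAt_mul_add_const k c u)).congr_deriv ?_
  ring

theorem hasDerivAt_cot_mul_add_const (hsin : sin (k * (u + c)) ≠ 0) :
    HasDerivAt (fun u : ℝ => cos (k * (u + c)) / sin (k * (u + c)))
      (-k / sin (k * (u + c)) ^ 2) u := by
  have hd := hasDerivAt_mul_add_const k c u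
  refine (((hasDerivAt_cos _).comp u hd).div ((hasDerivAt_sin _).comp u hd) hsin).congr_deriv ?_
  simp only [Function.comp_apply]
  field_simp
  linear_combination -k * sin_sq_add_cos_sq (k * (u + c))

theorem hasDerivAt_sin_two_mul_mul_add_const :
    HasDerivAt (fun u : ℝ => sin (2 * k * (u + c)))
      (2 * k * (2 * cos (k * (u + c)) ^ 2 - 1)) u := by
  refine ((hasDerivAt_sin _).comp u (hasDerivAt_mul_add_const (2 * k) c u)).congr_deriv ?_
  rw [mul_assoc, cos_two_mul]
  ring

end AffineArgument

theorem rpow_three_halves {a : ℝ} (ha : 0 ≤ a) : a ^ ((3 : ℝ) / 2) = a * √a := by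
  rw [show (3 : ℝ) / 2 = 1 + 1 / 2 by norm_num, rpow_add' ha (by norm_num), rpow_one,
    ← sqrt_eq_rpow]

theorem rpow_five_halves {a : ℝ} (ha : 0 ≤ a) : a ^ ((5 : ℝ) / 2) = a ^ 2 * √a := by
  rw [show (5 : ℝ) / 2 = 2 + 1 / 2 by norm_num, rpow_add' ha (by norm_num), rpow_two,
    ← sqrt_eq_rpow]

section ExplicitSolution

variable {a : ℝ} (b c p u : ℝ)

theorem hasDerivAt_sqrt_half_mul_tan (ha : 0 ≤ a) (hcos : cos (√(2 * a) * (u + c)) ≠ 0) :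
    HasDerivAt (fun u : ℝ => √(a / 2) * tan (√(2 * a) * (u + c)))
      (2 * (√(a / 2) * tan (√(2 * a) * (u + c))) ^ 2 + a) u := by
  refine ((hasDerivAt_tan_mul_add_const _ c u hcos).const_mul √(a / 2)).congr_deriv ?_
  have hsq : √(a / 2) ^ 2 = a / 2 := sq_sqrt (by positivity)
  have hmul : √(a / 2) * √(2 * a) = a := by
    rw [← sqrt_mul (by positivity), show a / 2 * (2 * a) = a ^ 2 by ring, sqrt_sq ha]
  have hpyth := sin_sq_add_cos_sq (√(2 * a) * (u + c))
  rw [tan_eq_sin_div_cos]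
  generalize √(2 * a) * (u + c) = θ at *
  generalize √(2 * a) = s at *
  field_simp
  linear_combination (-2 * sin θ ^ 2) * hsq + hmul - a * hpyth

theorem sqrt_half_mul_tan_sq_mul_cot_sq (ha : 0 ≤ a) {θ : ℝ} (hcos : cos θ ≠ 0)
    (hsin : sin θ ≠ 0) : (√(a / 2) * tan θ) ^ 2 * (cos θ / sin θ) ^ 2 = a / 2 := by
  rw [tan_eq_sin_div_cos, mul_pow, sq_sqrt (by positivity)]
  field_simp

variable (ha : 0 < a) {u} (hsin : sin (√(2 * a) * (u + c)) ≠ 0)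
include ha hsin

theorem hasDerivAt_cot_term_sub_linear :
    HasDerivAt (fun u : ℝ => -(√2 * b / a ^ ((3 : ℝ) / 2)) *
        (cos (√(2 * a) * (u + c)) / sin (√(2 * a) * (u + c))) - (2 * b / a) * (u + c))
      (2 * b / a * (cos (√(2 * a) * (u + c)) / sin (√(2 * a) * (u + c))) ^ 2) u := by
  refine (((hasDerivAt_cot_mul_add_const _ c u hsin).const_mul _).sub
    (hasDerivAt_mul_add_const _ c u)).congr_deriv ?_
  have hpyth := sin_sq_add_cos_sq (√(2 * a) * (u + c))
  generalize √(2 * a) * (u + c) = θ at *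
  rw [rpow_three_halves ha.le, sqrt_mul zero_le_two]
  have h2 : √2 ^ 2 = 2 := sq_sqrt zero_le_two
  have hsa : 0 < √a := sqrt_pos.2 ha
  field_simp
  linear_combination b * h2 - 2 * b * hpyth

theorem hasDerivAt_cot_term_add_sin_term_add_linear :
    HasDerivAt (fun u : ℝ => -(b ^ 2 / (√2 * a ^ ((5 : ℝ) / 2))) *
        (cos (√(2 * a) * (u + c)) / sin (√(2 * a) * (u + c))) +
        (p / (4 * √(2 * a))) * sin (2 * √(2 * a) * (u + c)) + (p / 2 - b ^ 2 / a ^ 2) * (u + c))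
      (b ^ 2 / a ^ 2 * (cos (√(2 * a) * (u + c)) / sin (√(2 * a) * (u + c))) ^ 2 +
        p * cos (√(2 * a) * (u + c)) ^ 2) u := by
  refine ((((hasDerivAt_cot_mul_add_const _ c u hsin).const_mul _).add
    ((hasDerivAt_sin_two_mul_mul_add_const _ c u).const_mul _)).add
    (hasDerivAt_mul_add_const _ c u)).congr_deriv ?_
  have hpyth := sin_sq_add_cos_sq (√(2 * a) * (u + c))
  generalize √(2 * a) * (u + c) = θ at *
  rw [rpow_five_halves ha.le, sqrt_mul zero_le_two]
  have hsa : 0 < √a := sqrt_pos.2 ha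
  field_simp
  linear_combination -8 * b ^ 2 * hpyth

end ExplicitSolution

/-- For `a > 0` the explicit functions
`r(u) = √(a/2)·tan(√(2a)(u+c))`,
`f(u) = -(√2 b/a^{3/2})cot(√(2a)(u+c)) - (2b/a)(u+c)`,
`g(u) = -(b²/(√2 a^{5/2}))cot(√(2a)(u+c)) + (p/(4√(2a)))sin(2√(2a)(u+c)) + (p/2 - b²/a²)(u+c)`
satisfy `r' = 2r² + a`, `r²f' = b`, and `b²/r(u)² - 2a·g'(u) = -2ap·cos²(√(2a)(u+c))`
wherever `cos(√(2a)(u+c)) ≠ 0` and `sin(√(2a)(u+c)) ≠ 0`. -/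
theorem stmt11 (a b c p : ℝ) (ha : 0 < a)
    (r f g : ℝ → ℝ)
    (hr : ∀ u, r u = Real.sqrt (a / 2) * Real.tan (Real.sqrt (2 * a) * (u + c)))
    (hf : ∀ u, f u = -(Real.sqrt 2 * b / a ^ ((3:ℝ)/2)) *
        (Real.cos (Real.sqrt (2 * a) * (u + c)) / Real.sin (Real.sqrt (2 * a) * (u + c))) -
        (2 * b / a) * (u + c))
    (hg : ∀ u, g u = -(b ^ 2 / (Real.sqrt 2 * a ^ ((5:ℝ)/2))) *
        (Real.cos (Real.sqrt (2 * a) * (u + c)) / Real.sin (Real.sqrt (2 * a) * (u + c))) +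
        (p / (4 * Real.sqrt (2 * a))) * Real.sin (2 * Real.sqrt (2 * a) * (u + c)) +
        (p / 2 - b ^ 2 / a ^ 2) * (u + c)) :
    ∀ u : ℝ, Real.cos (Real.sqrt (2 * a) * (u + c)) ≠ 0 →
      Real.sin (Real.sqrt (2 * a) * (u + c)) ≠ 0 →
      HasDerivAt r (2 * (r u) ^ 2 + a) u ∧
      (r u) ^ 2 * deriv f u = b ∧
      b ^ 2 / (r u) ^ 2 - 2 * a * deriv g u =
        -2 * a * p * (Real.cos (Real.sqrt (2 * a) * (u + c))) ^ 2 := by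
  intro u hcos hsin
  have hcot := sqrt_half_mul_tan_sq_mul_cot_sq ha.le hcos hsin
  rw [← hr] at hcot
  have hr0 : r u ≠ 0 := by
    rintro h
    rw [h] at hcot
    linarith
  rw [funext hf, (hasDerivAt_cot_term_sub_linear b c ha hsin).deriv,
    funext hg, (hasDerivAt_cot_term_add_sin_term_add_linear b c p ha hsin).deriv]
  refine ⟨funext hr ▸ hasDerivAt_sqrt_half_mul_tan c u ha.le hcos, ?_, ?_⟩
  all_goals
    generalize cos (√(2 * a) * (u + c)) / sin (√(2 * a) * (u + c)) = t at *
    field_simp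
  · linear_combination 2 * b * hcot
  · linear_combination -2 * b ^ 2 * hcot
end

section
/- Let a < 0, b real, and p = 0 in the singular-type surface X(u,v) = (f(u)+v, g(u)+u+r(u)v²/2, g(u)-u+r(u)v²/2) with r(u) = √(-a/2), f(u) = -(2b/a)u, g(u) = -(b²/a²)u. Then EG - F² = -4(b/a - √(-a/2)·v)², so the surface is timelike where v ≠ v₀ := (b/a)√(2/(-a)), and the curve u ↦ X(u, v₀) is a straight line with lightlike direction (0, 1 - b²/a², -1 - b²/a²) (up to scaling). -/
section Cylinder

variable {𝕜 E : Type*} [NontriviallyNormedField 𝕜] [NormedAddCommGroup E] [NormedSpace 𝕜 E]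

theorem deriv_smul_add_left (w : E) (γ : 𝕜 → E) (u v : 𝕜) :
    deriv (fun u' => u' • w + γ v) u = w := by
  simpa using ((hasDerivAt_id u).smul_const w).add_const (γ v) |>.deriv

theorem deriv_smul_add_right (w : E) (γ : 𝕜 → E) (u v : 𝕜) :
    deriv (fun v' => u • w + γ v') v = deriv γ v :=
  deriv_const_add (u • w)

end Cylinder

noncomputable def lightlikeDir (a b : ℝ) : ℝ × ℝ × ℝ :=
  (-(2 * b / a), 1 - b ^ 2 / a ^ 2, -1 - b ^ 2 / a ^ 2)

noncomputable def nullParabola (c v : ℝ) : ℝ × ℝ × ℝ := (v, c * v ^ 2 / 2, c * v ^ 2 / 2)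

theorem lprod_lightlikeDir_self (a b : ℝ) : Lprod (lightlikeDir a b) (lightlikeDir a b) = 0 := by
  rw [lightlikeDir, Lprod]
  ring

theorem lightlikeDir_ne_zero (a b : ℝ) : lightlikeDir a b ≠ 0 := by
  intro h
  have h3 : -1 - b ^ 2 / a ^ 2 = 0 := congrArg (fun p => p.2.2) h
  have : 0 ≤ b ^ 2 / a ^ 2 := by positivity
  linarith

theorem hasDerivAt_nullParabola (c v : ℝ) : HasDerivAt (nullParabola c) (1, c * v, c * v) v := by
  have hq : HasDerivAt (fun v' : ℝ => c * v' ^ 2 / 2) (c * v) v := by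
    refine (((hasDerivAt_pow 2 v).const_mul c).div_const 2).congr_deriv ?_
    norm_num
    ring
  exact (hasDerivAt_id v).prodMk (hq.prodMk hq)

theorem lprod_lightlikeDir_nullParabola_tangent (a b c v : ℝ) :
    Lprod (lightlikeDir a b) (1, c * v, c * v) = -2 * (b / a - c * v) := by
  rw [lightlikeDir, Lprod]
  ring

theorem sub_mul_ne_zero_of_ne_mul_inv {x c v : ℝ} (hc : c ≠ 0) (hv : v ≠ x * c⁻¹) :
    x - c * v ≠ 0 := by
  intro h
  apply hv
  field_simp
  linarith

/-- For `a < 0`, `p = 0`, the singular-type surface with `r(u) = √(-a/2)`,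
`f(u) = -(2b/a)u`, `g(u) = -(b²/a²)u` has `EG - F² = -4(b/a - √(-a/2)·v)²`; it is timelike
where `v ≠ v₀ := (b/a)√(2/(-a))`, and `u ↦ X(u, v₀)` is a straight line with lightlike
direction `(-2b/a, 1 - b²/a², -1 - b²/a²)`. -/
theorem stmt13 (a b : ℝ) (ha : a < 0)
    (X : ℝ → ℝ → ℝ × ℝ × ℝ)
    (hX : ∀ u v, X u v = (-(2 * b / a) * u + v,
        -(b ^ 2 / a ^ 2) * u + u + Real.sqrt (-a / 2) * v ^ 2 / 2,
        -(b ^ 2 / a ^ 2) * u - u + Real.sqrt (-a / 2) * v ^ 2 / 2)) :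
    (∀ u v : ℝ,
      let Xu := deriv (fun u' => X u' v) u
      let Xv := deriv (fun v' => X u v') v
      Lprod Xu Xu * Lprod Xv Xv - (Lprod Xu Xv) ^ 2 =
        -4 * (b / a - Real.sqrt (-a / 2) * v) ^ 2 ∧
      (v ≠ (b / a) * Real.sqrt (2 / (-a)) →
        Lprod Xu Xu * Lprod Xv Xv - (Lprod Xu Xv) ^ 2 < 0)) ∧
    (∀ u : ℝ, X u ((b / a) * Real.sqrt (2 / (-a))) =
      X 0 ((b / a) * Real.sqrt (2 / (-a))) +
        u • ((-(2 * b / a), 1 - b ^ 2 / a ^ 2, -1 - b ^ 2 / a ^ 2) : ℝ × ℝ × ℝ)) ∧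
    Lprod (-(2 * b / a), 1 - b ^ 2 / a ^ 2, -1 - b ^ 2 / a ^ 2)
      (-(2 * b / a), 1 - b ^ 2 / a ^ 2, -1 - b ^ 2 / a ^ 2) = 0 ∧
    ((-(2 * b / a), 1 - b ^ 2 / a ^ 2, -1 - b ^ 2 / a ^ 2) : ℝ × ℝ × ℝ) ≠ 0 := by
  set s := Real.sqrt (-a / 2)
  have hs : s ≠ 0 := (Real.sqrt_pos.mpr (by linarith)).ne'
  have hv₀ : Real.sqrt (2 / (-a)) = s⁻¹ := by rw [← inv_div, Real.sqrt_inv]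
  have hcyl : X = fun u v => u • lightlikeDir a b + nullParabola s v := by
    ext u v <;> simp [hX, lightlikeDir, nullParabola] <;> ring
  subst hcyl
  have hgram : ∀ v, Lprod (lightlikeDir a b) (lightlikeDir a b) *
      Lprod (1, s * v, s * v) (1, s * v, s * v) -
      Lprod (lightlikeDir a b) (1, s * v, s * v) ^ 2 = -4 * (b / a - s * v) ^ 2 := by
    intro v
    rw [lprod_lightlikeDir_self, lprod_lightlikeDir_nullParabola_tangent]
    ring
  refine ⟨fun u v => ?_, fun u => by simp [lightlikeDir, add_comm], lprod_lightlikeDir_self a b,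
    lightlikeDir_ne_zero a b⟩
  simp only [deriv_smul_add_left, deriv_smul_add_right, (hasDerivAt_nullParabola s v).deriv]
  refine ⟨hgram v, fun hv => ?_⟩
  rw [hgram]
  have := sub_mul_ne_zero_of_ne_mul_inv hs (hv₀ ▸ hv)
  have : 0 < (b / a - s * v) ^ 2 := by positivity
  linarith
end

section
/- The function f(x,y) = x·tanh(y) satisfies (1 - f_y²)f_xx + 2 f_x f_y f_xy + (1 - f_x²) f_yy = 0 on all of ℝ². -/
/-!
For a graph `t = x * g y` one has `f_xx = 0`, so the zero mean curvature expression collapses to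
`x * (2 g g'² + (1 - g²) g'')`. If `g` solves the Riccati equation `g' = 1 - g²`, as `tanh` does,
then `g'' = -2 g g'` and the bracket vanishes identically.
-/

open Real

theorem Real.hasDerivAt_tanh (y : ℝ) : HasDerivAt tanh (1 - tanh y ^ 2) y := by
  have h := (hasDerivAt_sinh y).div (hasDerivAt_cosh y) (cosh_pos y).ne'
  rw [show sinh / cosh = tanh from funext fun t => (tanh_eq_sinh_div_cosh t).symm] at h
  refine h.congr_deriv ?_
  rw [tanh_eq_sinh_div_cosh]
  field_simp

/-- The numerator of the mean curvature of the graph `t = f(x,y)` in Lorentz–Minkowski space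
`dx² + dy² - dt²`; the graph is ZMC exactly where it vanishes. -/
noncomputable def zmcOperator (f : ℝ → ℝ → ℝ) (x y : ℝ) : ℝ :=
  let fx := deriv (fun x' => f x' y) x
  let fy := deriv (fun y' => f x y') y
  let fxx := deriv (fun x' => deriv (fun x'' => f x'' y) x') x
  let fxy := deriv (fun y' => deriv (fun x' => f x' y') x) y
  let fyy := deriv (fun y' => deriv (fun y'' => f x y'') y') y
  (1 - fy ^ 2) * fxx + 2 * fx * fy * fxy + (1 - fx ^ 2) * fyy

theorem zmcOperator_mul_left {g g' g'' : ℝ → ℝ} (hg : ∀ t, HasDerivAt g (g' t) t)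
    (hg' : ∀ t, HasDerivAt g' (g'' t) t) (x y : ℝ) :
    zmcOperator (fun x y => x * g y) x y = x * (2 * g y * g' y ^ 2 + (1 - g y ^ 2) * g'' y) := by
  have hfx : ∀ s t, deriv (fun x' => x' * g t) s = g t := fun s t => by simp
  have hfy : ∀ s t, deriv (fun y' => s * g y') t = s * g' t := fun s t =>
    ((hg t).const_mul s).deriv
  have hfxx : deriv (fun x' => deriv (fun x'' => x'' * g y) x') x = 0 := by
    simp only [hfx, deriv_const]
  have hfxy : deriv (fun y' => deriv (fun x' => x' * g y') x) y = g' y := by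
    simp only [hfx]
    exact (hg y).deriv
  have hfyy : deriv (fun y' => deriv (fun y'' => x * g y'') y') y = x * g'' y := by
    simp only [hfy]
    exact ((hg' y).const_mul x).deriv
  simp only [zmcOperator]
  rw [hfxx, hfxy, hfyy, hfx, hfy]
  ring

theorem zmcOperator_mul_left_eq_zero_of_riccati {g : ℝ → ℝ}
    (hg : ∀ t, HasDerivAt g (1 - g t ^ 2) t) (x y : ℝ) :
    zmcOperator (fun x y => x * g y) x y = 0 := by
  have hg' : ∀ t, HasDerivAt (fun s => 1 - g s ^ 2) (-(2 * g t * (1 - g t ^ 2))) t := fun t => by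
    simpa using ((hg t).pow 2).const_sub 1
  rw [zmcOperator_mul_left hg hg']
  ring

/-- The function `f(x,y) = x·tanh y` satisfies the zero mean curvature
equation `(1 - f_y²)f_xx + 2 f_x f_y f_xy + (1 - f_x²) f_yy = 0` on all of `ℝ²`. -/
theorem stmt15 :
    ∀ x y : ℝ,
      let f : ℝ → ℝ → ℝ := fun x' y' => x' * Real.tanh y'
      let fx := deriv (fun x' => f x' y) x
      let fy := deriv (fun y' => f x y') y
      let fxx := deriv (fun x' => deriv (fun x'' => f x'' y) x') x
      let fxy := deriv (fun y' => deriv (fun x' => f x' y') x) y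
      let fyy := deriv (fun y' => deriv (fun y'' => f x y'') y') y
      (1 - fy ^ 2) * fxx + 2 * fx * fy * fxy + (1 - fx ^ 2) * fyy = 0 :=
  zmcOperator_mul_left_eq_zero_of_riccati Real.hasDerivAt_tanh
end

section
/- A surface X(u,v) = (f(u)+v, g(u)+u+r(u)v²/2, g(u)-u+r(u)v²/2) (with r nowhere zero) is invariant under the one-parameter group of isometries A_θ of Lorentz-Minkowski 3-space fixing pointwise the line spanned by (0,1,1) — where A_θ maps (x,y,t) to (x + θ(y - t), -θx + (1 - θ²/2)y + (θ²/2)t, -θx - (θ²/2)y + (1 + θ²/2)t) — if and only if f = 0 and r(u) = -1/(2u). -/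
/-- A surface `X(u,v) = (f(u)+v, g(u)+u+r(u)v²/2, g(u)-u+r(u)v²/2)` (with `r`
nowhere zero) is invariant under the one-parameter group `A_θ` of isometries of
Lorentz-Minkowski 3-space fixing pointwise the line spanned by `(0,1,1)` if and only if
`f = 0` and `r(u) = -1/(2u)`. -/
theorem stmt17 (f g r : ℝ → ℝ) (J : Set ℝ) (hr : ∀ u ∈ J, r u ≠ 0)
    (X : ℝ → ℝ → ℝ × ℝ × ℝ)
    (hX : ∀ u v, X u v = (f u + v, g u + u + r u * v ^ 2 / 2, g u - u + r u * v ^ 2 / 2))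
    (A : ℝ → ℝ × ℝ × ℝ → ℝ × ℝ × ℝ)
    (hA : ∀ θ p, A θ p = (p.1 + θ * (p.2.1 - p.2.2),
        -θ * p.1 + (1 - θ ^ 2 / 2) * p.2.1 + (θ ^ 2 / 2) * p.2.2,
        -θ * p.1 - (θ ^ 2 / 2) * p.2.1 + (1 + θ ^ 2 / 2) * p.2.2)) :
    (∀ θ : ℝ, ∀ u ∈ J, ∀ v : ℝ, ∃ u' ∈ J, ∃ v' : ℝ, A θ (X u v) = X u' v') ↔
      (∀ u ∈ J, f u = 0 ∧ r u = -1 / (2 * u)) := by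
  constructor
  · intro h u hu
    obtain ⟨u₁, hu₁, v₁, h1⟩ := h 1 u hu 0
    obtain ⟨u₂, hu₂, v₂, h2⟩ := h 1 u hu 1
    rw [hX, hA, hX] at h1 h2
    simp only [Prod.mk.injEq] at h1 h2
    obtain ⟨e1x, e1y, e1t⟩ := h1
    obtain ⟨e2x, e2y, e2t⟩ := h2
    have hu1 : u₁ = u := by linear_combination (e1t - e1y) / 2
    have hu2 : u₂ = u := by linear_combination (e2t - e2y) / 2
    rw [hu1] at e1x e1y
    rw [hu2] at e2x e2y
    have hv1 : v₁ = 2 * u := by linear_combination -e1x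
    have hv2 : v₂ = 1 + 2 * u := by linear_combination -e2x
    subst hv1; subst hv2
    have eqA : f u + u + 2 * r u * u ^ 2 = 0 := by linear_combination -e1y
    have eqB : f u + 1 + u + 2 * r u * u + 2 * r u * u ^ 2 = 0 := by
      linear_combination -e2y
    have hru : 2 * u * r u = -1 := by linear_combination eqB - eqA
    have hu0 : u ≠ 0 := by
      intro h0; rw [h0] at hru; norm_num at hru
    constructor
    · linear_combination eqA - u * hru
    · field_simp
      linarith [hru]
  · intro h θ u hu v
    refine ⟨u, hu, v + 2 * θ * u, ?_⟩
    obtain ⟨hf, hrr⟩ := h u hu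
    have hu0 : u ≠ 0 := by
      intro h0
      apply hr u hu
      rw [hrr, h0]
      norm_num
    have hr2 : 2 * u * r u = -1 := by
      rw [hrr]; field_simp
    rw [hX, hA, hX]
    simp only [Prod.mk.injEq]
    refine ⟨by ring, ?_, ?_⟩ <;>
      linear_combination (-θ) * hf - (θ * v + θ ^ 2 * u) * hr2
end

section
/- Let a < 0 and p < 0. The surface X(u,v) = (v, p·e^{-2√(-2a)u} + u + √(-a/2)·v²/2, p·e^{-2√(-2a)u} - u + √(-a/2)·v²/2) is not a ruled surface: there is no local reparametrization X = c(τ) + s·n(τ) with curves c, n : ℝ → ℝ³ and n(τ) ≠ 0. -/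
/-!
Along a ruling `τ = const` the parameters `u` and `v` are affine in `s`: `v` is the first
coordinate and `2u = X₂ - X₃`. Adding the last two coordinates then gives, for `s` in an
interval, `2p · e^{-2√(-2a) u} + √(-a/2) v² = (affine in s)`: an exponential of an affine
function of `s` equals a quadratic polynomial in `s`. Third finite differences kill the quadratic
and force the exponent to be constant; second and first differences then kill the quadratic and
linear coefficients. This makes the director `n(τ)` vanish.
-/

open Real Set Topology

lemma exists_Icc_subset_of_isOpen {U : Set (ℝ × ℝ)} (hU : IsOpen U) {x y : ℝ}
    (hxy : (x, y) ∈ U) :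
    ∃ b, y < b ∧ ∀ t ∈ Icc y b, (x, t) ∈ U := by
  have hslice : (fun t : ℝ => (x, t)) ⁻¹' U ∈ 𝓝[≥] y :=
    nhdsWithin_le_nhds <| (hU.preimage (Continuous.prodMk_right x)).mem_nhds hxy
  exact mem_nhdsGE_iff_exists_Icc_subset.mp hslice

lemma quadratic_coeffs_eq_zero_of_vanishing_on_Icc {a b α β γ : ℝ} (hab : a < b)
    (h : ∀ t ∈ Icc a b, α + β * t + γ * t ^ 2 = 0) : α = 0 ∧ β = 0 ∧ γ = 0 := by
  set δ := (b - a) / 2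
  have hδ : 0 < δ := by simp only [δ]; linarith
  have h₀ := h a ⟨le_rfl, hab.le⟩
  have h₁ := h (a + δ) ⟨by linarith, by simp only [δ]; linarith⟩
  have h₂ := h (a + 2 * δ) ⟨by linarith, by simp only [δ]; linarith⟩
  have hγ : γ = 0 := by
    have : γ * (2 * δ ^ 2) = 0 := by linear_combination h₂ - 2 * h₁ + h₀
    simpa [hδ.ne'] using this
  have hβ : β = 0 := by
    have : β * δ = 0 := by linear_combination h₁ - h₀ - (2 * a * δ + δ ^ 2) * hγ
    simpa [hδ.ne'] using this
  exact ⟨by linear_combination h₀ - a * hβ - a ^ 2 * hγ, hβ, hγ⟩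

lemma exp_quadratic_coeffs_eq_zero_of_vanishing_on_Icc {a b p l α β γ : ℝ} (hab : a < b)
    (hp : p ≠ 0) (h : ∀ t ∈ Icc a b, p * exp (l * t) + α + β * t + γ * t ^ 2 = 0) :
    l = 0 ∧ β = 0 ∧ γ = 0 := by
  set δ := (b - a) / 3
  have hδ : 0 < δ := by simp only [δ]; linarith
  have hmem : ∀ j : ℕ, j ≤ 3 → a + j * δ ∈ Icc a b := fun j hj => by
    have : (j : ℝ) ≤ 3 := by exact_mod_cast hj
    constructor <;> simp only [δ] <;> nlinarith
  have hexp : ∀ j : ℕ, exp (l * (a + j * δ)) = exp (l * a) * exp (l * δ) ^ j := fun j => by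
    rw [← exp_nat_mul, ← exp_add]; ring_nf
  have hpt : ∀ j : ℕ, j ≤ 3 → p * exp (l * a) * exp (l * δ) ^ j + α + β * (a + j * δ)
      + γ * (a + j * δ) ^ 2 = 0 := fun j hj => by
    rw [mul_assoc, ← hexp]; exact h _ (hmem j hj)
  have h₀ := hpt 0 (by norm_num)
  have h₁ := hpt 1 (by norm_num)
  have h₂ := hpt 2 (by norm_num)
  have h₃ := hpt 3 le_rfl
  push_cast at h₀ h₁ h₂ h₃
  have hcube : p * exp (l * a) * (exp (l * δ) - 1) ^ 3 = 0 := by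
    linear_combination h₃ - 3 * h₂ + 3 * h₁ - h₀
  have hl : l = 0 := by
    have : exp (l * δ) = 1 := by
      simpa [hp, (exp_pos _).ne', sub_eq_zero] using hcube
    simpa [hδ.ne'] using this
  have hquad : ∀ t ∈ Icc a b, (p + α) + β * t + γ * t ^ 2 = 0 := fun t ht => by
    simpa [hl, add_assoc] using h t ht
  obtain ⟨-, hβ, hγ⟩ := quadratic_coeffs_eq_zero_of_vanishing_on_Icc hab hquad
  exact ⟨hl, hβ, hγ⟩

lemma ruling_relation {p k S : ℝ} {X : ℝ → ℝ → ℝ × ℝ × ℝ}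
    (hX : ∀ u v, X u v = (v, p * exp (-2 * k * u) + u + S * v ^ 2 / 2,
        p * exp (-2 * k * u) - u + S * v ^ 2 / 2))
    {c n : ℝ × ℝ × ℝ} {u v s : ℝ} (h : X u v = c + s • n) :
    2 * p * exp (-k * (c.2.1 - c.2.2)) * exp (-k * (n.2.1 - n.2.2) * s)
      + (S * c.1 ^ 2 - (c.2.1 + c.2.2)) + (2 * S * c.1 * n.1 - (n.2.1 + n.2.2)) * s
      + S * n.1 ^ 2 * s ^ 2 = 0 := by
  rw [hX] at h
  obtain ⟨hv, h₂, h₃⟩ : v = c.1 + s * n.1 ∧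
      p * exp (-2 * k * u) + u + S * v ^ 2 / 2 = c.2.1 + s * n.2.1 ∧
      p * exp (-2 * k * u) - u + S * v ^ 2 / 2 = c.2.2 + s * n.2.2 := by
    simpa [Prod.ext_iff] using h
  have hexponent : -k * (c.2.1 - c.2.2) + -k * (n.2.1 - n.2.2) * s = -2 * k * u := by
    linear_combination k * (h₂ - h₃)
  rw [mul_assoc, ← exp_add, hexponent]
  subst hv
  linear_combination h₂ + h₃

/-- For `a < 0`, `p < 0`, the surface
`X(u,v) = (v, p·e^{-2√(-2a)u} + u + √(-a/2)v²/2, p·e^{-2√(-2a)u} - u + √(-a/2)v²/2)` is not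
a ruled surface: it admits no local representation `X = c(τ) + s·n(τ)` with a nowhere
vanishing director curve `n`. -/
theorem stmt18 (a p : ℝ) (ha : a < 0) (hp : p < 0)
    (X : ℝ → ℝ → ℝ × ℝ × ℝ)
    (hX : ∀ u v, X u v = (v,
        p * Real.exp (-2 * Real.sqrt (-2 * a) * u) + u + Real.sqrt (-a / 2) * v ^ 2 / 2,
        p * Real.exp (-2 * Real.sqrt (-2 * a) * u) - u + Real.sqrt (-a / 2) * v ^ 2 / 2)) :
    ¬ ∃ (c n : ℝ → ℝ × ℝ × ℝ) (U : Set (ℝ × ℝ)) (u v : ℝ × ℝ → ℝ),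
        IsOpen U ∧ U.Nonempty ∧
        ContDiffOn ℝ 2 u U ∧ ContDiffOn ℝ 2 v U ∧
        (∀ τ : ℝ, n τ ≠ 0) ∧
        (∀ q ∈ U, X (u q) (v q) = c q.1 + q.2 • n q.1) := by
  rintro ⟨c, n, U, u, v, hU, ⟨⟨τ, s₀⟩, hq⟩, -, -, hn, hrep⟩
  obtain ⟨b, hb, hseg⟩ := exists_Icc_subset_of_isOpen hU hq
  have hk : 0 < √(-2 * a) := sqrt_pos.mpr (by linarith)
  have hS : 0 < √(-a / 2) := sqrt_pos.mpr (by linarith)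
  obtain ⟨hl, hβ, hγ⟩ := exp_quadratic_coeffs_eq_zero_of_vanishing_on_Icc hb
    (mul_ne_zero (mul_ne_zero two_ne_zero hp.ne) (exp_pos _).ne')
    fun t ht => ruling_relation (c := c τ) (n := n τ) hX (hrep (τ, t) (hseg t ht))
  have hn₁ : (n τ).1 = 0 :=
    pow_eq_zero_iff two_ne_zero |>.mp <| (mul_eq_zero.mp hγ).resolve_left hS.ne'
  have hn₂₃ : (n τ).2.1 = (n τ).2.2 :=
    sub_eq_zero.mp <| (mul_eq_zero.mp hl).resolve_left (neg_ne_zero.mpr hk.ne')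
  have hn₂ : (n τ).2.1 = 0 := by rw [hn₁] at hβ; linarith
  exact hn τ (Prod.ext hn₁ (Prod.ext hn₂ (hn₂₃ ▸ hn₂)))
end
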